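/- The double semion F-symbols define a nontrivial cohomology class: the function F : G³ → U(1) on G = ℤ/2 × ℤ/2 given by F(a,b,c) = -1 when a,b,c ∈ {S,S̄} and 1 otherwise is a 3-cocycle that is not a coboundary, i.e., there is no function χ : G² → U(1) with F(a,b,c) = χ(b,c)·χ(a,bc)/(χ(ab,c)·χ(a,b)) for all a,b,c. -/

import Mathlib

/-- In `G = ℤ/2 × ℤ/2`, the semion `S = (1,0)`. -/
def dsS : ZMod 2 × ZMod 2 := (1, 0)

/-- The anti-semion `S̄ = (1,1)`. -/
def dsSbar : ZMod 2 × ZMod 2 := (1, 1)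

/-- The double semion F-symbols: `-1` if all three arguments lie in `{S, S̄}`,
and `1` otherwise. -/
noncomputable def dsF (a b c : ZMod 2 × ZMod 2) : ℂ :=
  if (a = dsS ∨ a = dsSbar) ∧ (b = dsS ∨ b = dsSbar) ∧ (c = dsS ∨ c = dsSbar)
  then -1 else 1

/-!
`F(a,b,c) = (-1)^(a₁ b₁ c₁)` is the sign of a trilinear form over `𝔽₂`, and the sign of any
trilinear form is a 3-cocycle. For any `χ` and any `g` with `g + g = 0`, the coboundary satisfies
`dχ(g,g,g) = dχ(g,g,0) · dχ(0,g,g)`; at `g = S` this reads `-1 = 1 · 1` for `F`, so `F` is not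
a coboundary.
-/

theorem neg_one_pow_val_add {R : Type*} [Ring R] (x y : ZMod 2) :
    (-1 : R) ^ (x + y).val = (-1) ^ x.val * (-1) ^ y.val := by
  rw [ZMod.val_add, ← neg_one_pow_eq_pow_mod_two, pow_add]

theorem neg_one_pow_trilinear_cocycle {G R : Type*} [Add G] [Ring R]
    (f : G → G → G → ZMod 2)
    (hf₁ : ∀ a a' b c, f (a + a') b c = f a b c + f a' b c)
    (hf₂ : ∀ a b b' c, f a (b + b') c = f a b c + f a b' c)
    (hf₃ : ∀ a b c c', f a b (c + c') = f a b c + f a b c') (a b c d : G) :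
    (-1 : R) ^ (f a b c).val * (-1) ^ (f a (b + c) d).val * (-1) ^ (f b c d).val =
      (-1) ^ (f (a + b) c d).val * (-1) ^ (f a b (c + d)).val := by
  simp only [← neg_one_pow_val_add]
  congr 2
  rw [hf₁, hf₂, hf₃]
  ring

def coboundary {G M : Type*} [Add G] [Div M] [Mul M] (χ : G → G → M) (a b c : G) : M :=
  χ b c * χ a (b + c) / (χ (a + b) c * χ a b)

theorem coboundary_self_self_self {G M : Type*} [AddMonoid G] [CommGroupWithZero M]
    (χ : G → G → M) (hχ : ∀ a b, χ a b ≠ 0) {g : G} (hg : g + g = 0) :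
    coboundary χ g g g = coboundary χ g g 0 * coboundary χ 0 g g := by
  have hgg := hχ g g
  have h00 := hχ 0 0
  have h0g := hχ 0 g
  simp only [coboundary, hg, add_zero, zero_add]
  field_simp

theorem dsF_eq_neg_one_pow (a b c : ZMod 2 × ZMod 2) :
    dsF a b c = (-1 : ℂ) ^ (a.1 * b.1 * c.1).val := by
  have mem_iff : ∀ x : ZMod 2 × ZMod 2, (x = dsS ∨ x = dsSbar) ↔ x.1 = 1 := by decide
  have fst_cases : ∀ x : ZMod 2 × ZMod 2, x.1 = 0 ∨ x.1 = 1 := by decide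
  unfold dsF
  simp only [mem_iff]
  rcases fst_cases a with ha | ha <;> rcases fst_cases b with hb | hb <;>
    rcases fst_cases c with hc | hc <;> simp [ha, hb, hc, ZMod.val_one]

/-- The double semion F-symbols form a 3-cocycle on `ℤ/2 × ℤ/2` that is not
the coboundary of any `χ : G² → U(1)`: they define a nontrivial cohomology
class. -/
theorem stmt10 :
    (∀ a b c d : ZMod 2 × ZMod 2,
      dsF a b c * dsF a (b + c) d * dsF b c d =
        dsF (a + b) c d * dsF a b (c + d)) ∧
    ¬ ∃ χ : (ZMod 2 × ZMod 2) → (ZMod 2 × ZMod 2) → ℂ,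
        (∀ a b, ‖χ a b‖ = 1) ∧
        (∀ a b c : ZMod 2 × ZMod 2,
          dsF a b c = χ b c * χ a (b + c) / (χ (a + b) c * χ a b)) := by
  constructor
  · intro a b c d
    simp only [dsF_eq_neg_one_pow]
    refine neg_one_pow_trilinear_cocycle (fun a b c : ZMod 2 × ZMod 2 => a.1 * b.1 * c.1)
      ?_ ?_ ?_ a b c d <;> intros <;> simp only [Prod.fst_add] <;> ring
  · rintro ⟨χ, hnorm, hF⟩
    have hF_coboundary : ∀ a b c, dsF a b c = coboundary χ a b c := hF
    have hχ : ∀ a b, χ a b ≠ 0 := fun a b h => by simpa [h] using hnorm a b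
    have key := coboundary_self_self_self χ hχ (g := dsS) (by decide)
    simp only [← hF_coboundary, dsF_eq_neg_one_pow] at key
    norm_num [dsS, ZMod.val_one] at key
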